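/- Let F be holomorphic on an open set D ⊆ ℂ, and let γ be a circle in D around z₀ whose closed disk lies in D. Then for ζ = z + ζ₁ρ + ζ₂ρ² with z inside γ, the principal extension equals F(z) + ζ₁F'(z)ρ + (ζ₂F'(z) + (ζ₁²/2)F''(z))ρ², i.e., each Cartan component of the principal extension is an analytic function of z = f(ζ). -/

import Mathlib

open scoped Topology
open Filter

noncomputable section

/-- The three-dimensional commutative algebra `A₃ = ℂ[ρ]/(ρ³)`,
represented by coordinates in the Cartan basis `{1, ρ, ρ²}`. -/
@[ext] structure A3 : Type where
  x0 : ℂ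
  x1 : ℂ
  x2 : ℂ

namespace A3

instance : Zero A3 := ⟨⟨0,0,0⟩⟩
instance : One A3 := ⟨⟨1,0,0⟩⟩
instance : Add A3 := ⟨fun u v => ⟨u.x0+v.x0, u.x1+v.x1, u.x2+v.x2⟩⟩
instance : Neg A3 := ⟨fun u => ⟨-u.x0, -u.x1, -u.x2⟩⟩
instance : Mul A3 :=
  ⟨fun u v => ⟨u.x0*v.x0, u.x0*v.x1+u.x1*v.x0, u.x0*v.x2+u.x1*v.x1+u.x2*v.x0⟩⟩
instance : SMul ℂ A3 := ⟨fun a u => ⟨a*u.x0, a*u.x1, a*u.x2⟩⟩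

@[simp] lemma zero_x0 : (0:A3).x0 = 0 := rfl
@[simp] lemma zero_x1 : (0:A3).x1 = 0 := rfl
@[simp] lemma zero_x2 : (0:A3).x2 = 0 := rfl
@[simp] lemma one_x0 : (1:A3).x0 = 1 := rfl
@[simp] lemma one_x1 : (1:A3).x1 = 0 := rfl
@[simp] lemma one_x2 : (1:A3).x2 = 0 := rfl
@[simp] lemma add_x0 (u v : A3) : (u+v).x0 = u.x0+v.x0 := rfl
@[simp] lemma add_x1 (u v : A3) : (u+v).x1 = u.x1+v.x1 := rfl
@[simp] lemma add_x2 (u v : A3) : (u+v).x2 = u.x2+v.x2 := rfl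
@[simp] lemma neg_x0 (u : A3) : (-u).x0 = -u.x0 := rfl
@[simp] lemma neg_x1 (u : A3) : (-u).x1 = -u.x1 := rfl
@[simp] lemma neg_x2 (u : A3) : (-u).x2 = -u.x2 := rfl
@[simp] lemma mul_x0 (u v : A3) : (u*v).x0 = u.x0*v.x0 := rfl
@[simp] lemma mul_x1 (u v : A3) : (u*v).x1 = u.x0*v.x1+u.x1*v.x0 := rfl
@[simp] lemma mul_x2 (u v : A3) : (u*v).x2 = u.x0*v.x2+u.x1*v.x1+u.x2*v.x0 := rfl
@[simp] lemma smul_x0 (a : ℂ) (u : A3) : (a•u).x0 = a*u.x0 := rfl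
@[simp] lemma smul_x1 (a : ℂ) (u : A3) : (a•u).x1 = a*u.x1 := rfl
@[simp] lemma smul_x2 (a : ℂ) (u : A3) : (a•u).x2 = a*u.x2 := rfl

instance : AddCommGroup A3 where
  add_assoc u v w := by ext <;> simp <;> ring
  zero_add u := by ext <;> simp
  add_zero u := by ext <;> simp
  add_comm u v := by ext <;> simp <;> ring
  neg_add_cancel u := by ext <;> simp
  nsmul := nsmulRec
  zsmul := zsmulRec

instance : CommRing A3 where
  __ := (inferInstance : AddCommGroup A3)
  left_distrib u v w := by ext <;> simp <;> ring
  right_distrib u v w := by ext <;> simp <;> ring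
  zero_mul u := by ext <;> simp
  mul_zero u := by ext <;> simp
  mul_assoc u v w := by ext <;> simp <;> ring
  one_mul u := by ext <;> simp
  mul_one u := by ext <;> simp
  mul_comm u v := by ext <;> simp <;> ring

instance : Module ℂ A3 where
  one_smul u := by ext <;> simp
  mul_smul a b u := by ext <;> simp <;> ring
  smul_zero a := by ext <;> simp [zero_x0, zero_x1, zero_x2]
  smul_add a u v := by ext <;> simp <;> ring
  add_smul a b u := by ext <;> simp <;> ring
  zero_smul u := by ext <;> simp [zero_x0, zero_x1, zero_x2]

instance : Algebra ℂ A3 where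
  algebraMap :=
  { toFun := fun a => ⟨a, 0, 0⟩
    map_one' := rfl
    map_mul' := fun a b => by ext <;> simp
    map_zero' := rfl
    map_add' := fun a b => by ext <;> simp }
  commutes' a u := by ext <;> simp <;> ring
  smul_def' a u := by ext <;> simp

@[simp] lemma algebraMap_x0 (a : ℂ) : (algebraMap ℂ A3 a).x0 = a := rfl
@[simp] lemma algebraMap_x1 (a : ℂ) : (algebraMap ℂ A3 a).x1 = 0 := rfl
@[simp] lemma algebraMap_x2 (a : ℂ) : (algebraMap ℂ A3 a).x2 = 0 := rfl

/-- The nilpotent generator `ρ`. -/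
def rho : A3 := ⟨0, 1, 0⟩

@[simp] lemma rho_x0 : rho.x0 = 0 := rfl
@[simp] lemma rho_x1 : rho.x1 = 1 := rfl
@[simp] lemma rho_x2 : rho.x2 = 0 := rfl

lemma rho_cube : rho ^ 3 = 0 := by ext <;> simp [pow_succ] <;> ring

/-- The projection `f(a + bρ + cρ²) = a`, as a `ℂ`-algebra homomorphism. -/
def pf : A3 →ₐ[ℂ] ℂ where
  toFun u := u.x0
  map_one' := rfl
  map_mul' u v := rfl
  map_zero' := rfl
  map_add' u v := rfl
  commutes' a := rfl

@[simp] lemma pf_apply (u : A3) : pf u = u.x0 := rfl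

/-- The embedding of `A3` into `EuclideanSpace ℂ (Fin 3)`, used to endow
`A3` with the Euclidean norm on the Cartan coordinates. -/
def toE : A3 →ₗ[ℂ] EuclideanSpace ℂ (Fin 3) where
  toFun u := (WithLp.equiv 2 (Fin 3 → ℂ)).symm ![u.x0, u.x1, u.x2]
  map_add' u v := by
    ext i
    fin_cases i <;> rfl
  map_smul' a u := by
    ext i
    fin_cases i <;> rfl

lemma toE_injective : Function.Injective toE := by
  intro u v h
  have h0 : toE u 0 = toE v 0 := congrArg (fun w => w 0) h
  have h1 : toE u 1 = toE v 1 := congrArg (fun w => w 1) h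
  have h2 : toE u 2 = toE v 2 := congrArg (fun w => w 2) h
  ext
  · exact h0
  · exact h1
  · exact h2

instance : NormedAddCommGroup A3 :=
  NormedAddCommGroup.induced A3 (EuclideanSpace ℂ (Fin 3)) toE.toAddMonoidHom
    toE_injective

instance : NormedSpace ℂ A3 := NormedSpace.induced ℂ A3 (EuclideanSpace ℂ (Fin 3)) toE

lemma norm_def (u : A3) :
    ‖u‖ = Real.sqrt (‖u.x0‖ ^ 2 + ‖u.x1‖ ^ 2 + ‖u.x2‖ ^ 2) := by
  show ‖toE u‖ = _
  rw [EuclideanSpace.norm_eq]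
  simp [toE, Fin.sum_univ_three]

/-- The set `I = {λ₁ρ + λ₂ρ² : λ₁, λ₂ ∈ ℂ}` (the radical of `A₃`). -/
def idealSet : Set A3 := {x | ∃ l1 l2 : ℂ, x = l1 • rho + l2 • rho ^ 2}

/-- The set of directions `{±1, ±i, ±ρ, ±iρ, ±ρ², ±iρ²}`. -/
def dirs : Set A3 :=
  {1, -1, Complex.I • (1:A3), -(Complex.I • (1:A3)),
   rho, -rho, Complex.I • rho, -(Complex.I • rho),
   rho ^ 2, -(rho ^ 2), Complex.I • rho ^ 2, -(Complex.I • rho ^ 2)}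

end A3

namespace A3

instance : FiniteDimensional ℂ A3 := FiniteDimensional.of_injective toE toE_injective
instance : CompleteSpace A3 := FiniteDimensional.complete ℂ A3

@[simp] lemma sub_x0 (u v : A3) : (u - v).x0 = u.x0 - v.x0 := by
  rw [sub_eq_add_neg, sub_eq_add_neg]; simp
@[simp] lemma sub_x1 (u v : A3) : (u - v).x1 = u.x1 - v.x1 := by
  rw [sub_eq_add_neg, sub_eq_add_neg]; simp
@[simp] lemma sub_x2 (u v : A3) : (u - v).x2 = u.x2 - v.x2 := by
  rw [sub_eq_add_neg, sub_eq_add_neg]; simp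

lemma rho_sq : rho ^ 2 = ⟨0, 0, 1⟩ := by ext <;> simp [pow_two]

end A3

open Metric

lemma circleIntegral_add' {E : Type*} [NormedAddCommGroup E] [NormedSpace ℂ E]
    {f g : ℂ → E} {c : ℂ} {R : ℝ} (hf : CircleIntegrable f c R)
    (hg : CircleIntegrable g c R) :
    (∮ z in C(c, R), (f z + g z)) = (∮ z in C(c, R), f z) + ∮ z in C(c, R), g z := by
  simp only [circleIntegral, smul_add, intervalIntegral.integral_add hf.out hg.out]

lemma aux_cauchy (G : ℂ → ℂ) (z₀ : ℂ) (r : ℝ) (hr : 0 < r)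
    (hG : DifferentiableOn ℂ G (closedBall z₀ r)) (z : ℂ) (hz : z ∈ ball z₀ r) :
    (∮ t in C(z₀, r), G t * (t - z)⁻¹) = 2 * Real.pi * Complex.I * G z := by
  have h2 : (∮ t in C(z₀, r), G t * (t - z)⁻¹) = ∮ t in C(z₀, r), (t - z)⁻¹ • G t := by
    apply circleIntegral.integral_congr hr.le
    intro t _
    simp [smul_eq_mul, mul_comm]
  rw [h2, hG.circleIntegral_sub_inv_smul hz, smul_eq_mul]

lemma sphere_sub_ne (z₀ z : ℂ) (r : ℝ) (hz : z ∈ ball z₀ r) :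
    ∀ t ∈ sphere z₀ r, t - z ≠ 0 := by
  intro t ht h
  rw [sub_eq_zero] at h
  subst h
  rw [mem_sphere] at ht
  rw [mem_ball, ht] at hz
  exact lt_irrefl _ hz

lemma aux_integrable (H : ℂ → ℂ) (z₀ z : ℂ) (r : ℝ)
    (hH : ContinuousOn H (sphere z₀ r)) (hr : 0 < r) (hz : z ∈ ball z₀ r) (k : ℕ) :
    CircleIntegrable (fun t => H t * ((t - z) ^ k)⁻¹) z₀ r := by
  apply ContinuousOn.circleIntegrable hr.le
  exact hH.mul (((continuousOn_id.sub continuousOn_const).pow k).inv₀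
    fun t ht => pow_ne_zero _ (sphere_sub_ne z₀ z r hz t ht))

lemma aux_parts (D : Set ℂ) (hD : IsOpen D) (G : ℂ → ℂ) (hG : DifferentiableOn ℂ G D)
    (z₀ : ℂ) (r : ℝ) (hr : 0 < r) (hball : closedBall z₀ r ⊆ D) (z : ℂ)
    (hz : z ∈ ball z₀ r) (n : ℕ) :
    (∮ t in C(z₀, r), G t * ((t - z) ^ (n + 2))⁻¹) =
      ((n : ℂ) + 1)⁻¹ * ∮ t in C(z₀, r), deriv G t * ((t - z) ^ (n + 1))⁻¹ := by
  have hsub : sphere z₀ r ⊆ D := fun t ht => hball (sphere_subset_closedBall ht)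
  have hne := sphere_sub_ne z₀ z r hz
  have hG' : DifferentiableOn ℂ (deriv G) D := ((hG.analyticOnNhd hD).deriv).differentiableOn
  have hi1 : CircleIntegrable (fun t => deriv G t * ((t - z) ^ (n + 1))⁻¹) z₀ r :=
    aux_integrable _ z₀ z r ((hG'.continuousOn).mono hsub) hr hz _
  have hi2 : CircleIntegrable (fun t => ((n : ℂ) + 1) * (G t * ((t - z) ^ (n + 2))⁻¹)) z₀ r := by
    apply ContinuousOn.circleIntegrable hr.le
    exact continuousOn_const.mul (((hG.continuousOn).mono hsub).mul
      (((continuousOn_id.sub continuousOn_const).pow _).inv₀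
        fun t ht => pow_ne_zero _ (hne t ht)))
  have hzero : (∮ t in C(z₀, r),
      (deriv G t * ((t - z) ^ (n + 1))⁻¹ - ((n : ℂ) + 1) * (G t * ((t - z) ^ (n + 2))⁻¹))) = 0 := by
    apply circleIntegral.integral_eq_zero_of_hasDerivWithinAt hr.le
    intro t ht
    apply HasDerivAt.hasDerivWithinAt
    have hGt : HasDerivAt G (deriv G t) t :=
      (hG.differentiableAt (hD.mem_nhds (hsub ht))).hasDerivAt
    have hp : HasDerivAt (fun t => (t - z) ^ (n + 1))
        (((n : ℂ) + 1) * (t - z) ^ n * 1) t := by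
      have := ((hasDerivAt_id t).sub_const z).pow (n + 1)
      exact this.congr_deriv (by simp)
    have hinv := hp.inv (pow_ne_zero _ (hne t ht))
    have := hGt.mul hinv
    refine this.congr_deriv ?_
    have h0 := hne t ht
    rw [Pi.inv_apply]
    field_simp
    ring
  rw [circleIntegral.integral_sub hi1 hi2, sub_eq_zero] at hzero
  rw [circleIntegral.integral_const_mul] at hzero
  rw [hzero, inv_mul_cancel_left₀ (Nat.cast_add_one_ne_zero n)]


/-- the principal extension of a holomorphic `F` along a circle equals
`F(z) + ζ₁F'(z)ρ + (ζ₂F'(z) + (ζ₁²/2)F''(z))ρ²`. -/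
theorem principal_extension_formula (D : Set ℂ) (hD : IsOpen D) (F : ℂ → ℂ)
    (hF : DifferentiableOn ℂ F D) (z₀ : ℂ) (r : ℝ) (hr : 0 < r)
    (hball : Metric.closedBall z₀ r ⊆ D) (z ζ₁ ζ₂ : ℂ) (hz : z ∈ Metric.ball z₀ r) :
    (2 * Real.pi * Complex.I : ℂ)⁻¹ •
        (∮ t in C(z₀, r), F t • Ring.inverse (algebraMap ℂ A3 t -
          (algebraMap ℂ A3 z + ζ₁ • A3.rho + ζ₂ • A3.rho ^ 2))) =
      algebraMap ℂ A3 (F z) + (ζ₁ * deriv F z) • A3.rho +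
        (ζ₂ * deriv F z + ζ₁ ^ 2 / 2 * deriv (deriv F) z) • A3.rho ^ 2 := by
  have hne := sphere_sub_ne z₀ z r hz
  have hFcb : DifferentiableOn ℂ F (Metric.closedBall z₀ r) := hF.mono hball
  have hF' : DifferentiableOn ℂ (deriv F) D := ((hF.analyticOnNhd hD).deriv).differentiableOn
  have hF'cb : DifferentiableOn ℂ (deriv F) (Metric.closedBall z₀ r) := hF'.mono hball
  have hF'' : DifferentiableOn ℂ (deriv (deriv F)) D :=
    ((hF'.analyticOnNhd hD).deriv).differentiableOn
  have hsub : Metric.sphere z₀ r ⊆ D := fun t ht => hball (Metric.sphere_subset_closedBall ht)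
  have hFc : ContinuousOn F (Metric.sphere z₀ r) := hF.continuousOn.mono hsub
  have hcongr : Set.EqOn
      (fun t => F t • Ring.inverse (algebraMap ℂ A3 t -
        (algebraMap ℂ A3 z + ζ₁ • A3.rho + ζ₂ • A3.rho ^ 2)))
      (fun t => (F t * (t - z)⁻¹) • (1:A3) + (ζ₁ * (F t * ((t - z)^2)⁻¹)) • A3.rho
        + (ζ₂ * (F t * ((t - z)^2)⁻¹) + ζ₁^2 * (F t * ((t - z)^3)⁻¹)) • A3.rho ^ 2)
      (Metric.sphere z₀ r) := by
    intro t ht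
    have h0 := hne t ht
    set u : A3 := algebraMap ℂ A3 t - (algebraMap ℂ A3 z + ζ₁ • A3.rho + ζ₂ • A3.rho ^ 2) with hu
    set v : A3 := ⟨(t - z)⁻¹, ζ₁ * ((t - z)^2)⁻¹, ζ₂ * ((t - z)^2)⁻¹ + ζ₁^2 * ((t - z)^3)⁻¹⟩
      with hv
    have huv : u * v = 1 := by
      ext <;> simp [hu, hv, A3.rho_sq] <;> field_simp <;> ring
    have hinv : Ring.inverse u = v :=
      Ring.inverse_unit ⟨u, v, huv, by rw [mul_comm]; exact huv⟩
    show F t • Ring.inverse u = _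
    rw [hinv]
    ext <;> simp [hv, A3.rho_sq] <;> ring
  rw [circleIntegral.integral_congr hr.le hcongr]
  have hcpow : ∀ k : ℕ, ContinuousOn (fun t => ((t - z) ^ k)⁻¹) (Metric.sphere z₀ r) :=
    fun k => ((continuousOn_id.sub continuousOn_const).pow k).inv₀
      fun t ht => pow_ne_zero _ (hne t ht)
  have hc0 : ContinuousOn (fun t => F t * (t - z)⁻¹) (Metric.sphere z₀ r) := by
    have := hFc.mul (hcpow 1)
    simp only [pow_one] at this
    exact this
  have hc1 : ContinuousOn (fun t => ζ₁ * (F t * ((t - z)^2)⁻¹)) (Metric.sphere z₀ r) :=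
    continuousOn_const.mul (hFc.mul (hcpow 2))
  have hc2 : ContinuousOn
      (fun t => ζ₂ * (F t * ((t - z)^2)⁻¹) + ζ₁^2 * (F t * ((t - z)^3)⁻¹))
      (Metric.sphere z₀ r) :=
    (continuousOn_const.mul (hFc.mul (hcpow 2))).add
      (continuousOn_const.mul (hFc.mul (hcpow 3)))
  have hi0 : CircleIntegrable (fun t => F t * (t - z)⁻¹) z₀ r := by
    simpa using aux_integrable F z₀ z r hFc hr hz 1
  have hi1 : CircleIntegrable (fun t => F t * ((t - z)^2)⁻¹) z₀ r :=
    aux_integrable F z₀ z r hFc hr hz 2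
  have hi2 : CircleIntegrable (fun t => F t * ((t - z)^3)⁻¹) z₀ r :=
    aux_integrable F z₀ z r hFc hr hz 3
  have hadd : (∮ t in C(z₀, r), ((F t * (t - z)⁻¹) • (1:A3)
        + (ζ₁ * (F t * ((t - z)^2)⁻¹)) • A3.rho
        + (ζ₂ * (F t * ((t - z)^2)⁻¹) + ζ₁^2 * (F t * ((t - z)^3)⁻¹)) • A3.rho ^ 2)) =
      (∮ t in C(z₀, r), F t * (t - z)⁻¹) • (1:A3)
        + (∮ t in C(z₀, r), ζ₁ * (F t * ((t - z)^2)⁻¹)) • A3.rho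
        + (∮ t in C(z₀, r), (ζ₂ * (F t * ((t - z)^2)⁻¹) + ζ₁^2 * (F t * ((t - z)^3)⁻¹)))
            • A3.rho ^ 2 := by
    rw [circleIntegral_add', circleIntegral_add']
    · rw [circleIntegral.integral_smul_const, circleIntegral.integral_smul_const,
        circleIntegral.integral_smul_const]
    · exact (hc0.smul continuousOn_const).circleIntegrable hr.le
    · exact (hc1.smul continuousOn_const).circleIntegrable hr.le
    · exact ((hc0.smul continuousOn_const).add
        (hc1.smul continuousOn_const)).circleIntegrable hr.le
    · exact (hc2.smul continuousOn_const).circleIntegrable hr.le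
  rw [hadd]
  have I0 : (∮ t in C(z₀, r), F t * (t - z)⁻¹) = 2 * Real.pi * Complex.I * F z :=
    aux_cauchy F z₀ r hr hFcb z hz
  have I1 : (∮ t in C(z₀, r), F t * ((t - z)^2)⁻¹) = 2 * Real.pi * Complex.I * deriv F z := by
    have h := aux_parts D hD F hF z₀ r hr hball z hz 0
    simp only [Nat.cast_zero, zero_add, inv_one, one_mul, pow_one] at h
    rw [h, aux_cauchy (deriv F) z₀ r hr hF'cb z hz]
  have I2 : (∮ t in C(z₀, r), F t * ((t - z)^3)⁻¹) =
      1 / 2 * (2 * Real.pi * Complex.I * deriv (deriv F) z) := by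
    have h1 := aux_parts D hD F hF z₀ r hr hball z hz 1
    have h2 := aux_parts D hD (deriv F) hF' z₀ r hr hball z hz 0
    simp only [Nat.cast_zero, Nat.cast_one, zero_add, inv_one, one_mul, pow_one] at h1 h2
    norm_num at h1
    rw [h1, h2, aux_cauchy (deriv (deriv F)) z₀ r hr (hF''.mono hball) z hz]
  rw [circleIntegral.integral_const_mul, circleIntegral_add']
  · rw [circleIntegral.integral_const_mul, circleIntegral.integral_const_mul, I0, I1, I2]
    have h2pi : (2 * (Real.pi : ℂ) * Complex.I) ≠ 0 := Complex.two_pi_I_ne_zero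
    rw [smul_add, smul_add, smul_smul, smul_smul, smul_smul]
    have e0 : (2 * (Real.pi:ℂ) * Complex.I)⁻¹ * (2 * Real.pi * Complex.I * F z) = F z :=
      inv_mul_cancel_left₀ h2pi (F z)
    have e1 : (2 * (Real.pi:ℂ) * Complex.I)⁻¹ *
        (ζ₁ * (2 * Real.pi * Complex.I * deriv F z)) = ζ₁ * deriv F z := by
      rw [show ζ₁ * (2 * (Real.pi:ℂ) * Complex.I * deriv F z) =
        2 * (Real.pi:ℂ) * Complex.I * (ζ₁ * deriv F z) from by ring,
        inv_mul_cancel_left₀ h2pi]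
    have e2 : (2 * (Real.pi:ℂ) * Complex.I)⁻¹ *
        (ζ₂ * (2 * Real.pi * Complex.I * deriv F z) +
          ζ₁ ^ 2 * (1 / 2 * (2 * Real.pi * Complex.I * deriv (deriv F) z))) =
        ζ₂ * deriv F z + ζ₁ ^ 2 / 2 * deriv (deriv F) z := by
      rw [show ζ₂ * (2 * (Real.pi:ℂ) * Complex.I * deriv F z) +
          ζ₁ ^ 2 * (1 / 2 * (2 * (Real.pi:ℂ) * Complex.I * deriv (deriv F) z)) =
        2 * (Real.pi:ℂ) * Complex.I *
          (ζ₂ * deriv F z + ζ₁ ^ 2 / 2 * deriv (deriv F) z) from by ring,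
        inv_mul_cancel_left₀ h2pi]
    rw [e0, e1, e2]
    ext <;> simp [A3.rho_sq]
  · exact (continuousOn_const.mul (hFc.mul (hcpow 2))).circleIntegrable hr.le
  · exact (continuousOn_const.mul (hFc.mul (hcpow 3))).circleIntegrable hr.le
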